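/- (Max-path exchange identity underlying queueing associativity.) Let a=(a_i), s=(s_i) be real sequences and define š_i = a_i ∧ t_{i−1} and ã_j = d_j as the dual service and departure outputs of the queue with input (a,s). Then for all k ≤ m: max_{k≤ℓ≤m} [ Σ_{i=k}^ℓ š_i + Σ_{j=ℓ}^m ã_j ] = max_{k≤ℓ≤m} [ Σ_{i=k}^ℓ a_i + Σ_{j=ℓ}^m s_j ]. -/

import Mathlib

/-- Cumulative sums of a bi-infinite sequence, normalized so `cum a 0 = 0`
and `cum a j - cum a (j-1) = a j` for all `j`. -/
noncomputable def cum (a : ℤ → ℝ) (j : ℤ) : ℝ :=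
  if 0 ≤ j then ∑ i ∈ Finset.Icc 1 j, a i else -∑ i ∈ Finset.Icc (j + 1) 0, a i

/-- The set whose supremum gives `G̃_j = sup_{k ≤ j} { G_k + Σ_{i=k}^j s_i }`,
where `G = cum a` is an antiderivative of the inter-arrival sequence `a`. -/
def gtSet (a s : ℤ → ℝ) (j : ℤ) : Set ℝ :=
  { v | ∃ k ≤ j, v = cum a k + ∑ i ∈ Finset.Icc k j, s i }

/-- `G̃_j`, the departure time process of the queue with arrivals `a` and services `s`. -/
noncomputable def queueGt (a s : ℤ → ℝ) (j : ℤ) : ℝ := sSup (gtSet a s j)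

/-- Inter-departure process `D(a,s)`. -/
noncomputable def queueD (a s : ℤ → ℝ) (j : ℤ) : ℝ :=
  queueGt a s j - queueGt a s (j - 1)

/-- Sojourn process `S(a,s)`. -/
noncomputable def queueT (a s : ℤ → ℝ) (j : ℤ) : ℝ := queueGt a s j - cum a j

/-- Dual service process `R(a,s)`. -/
noncomputable def queueR (a s : ℤ → ℝ) (j : ℤ) : ℝ :=
  min (a j) (queueT a s (j - 1))

/-- The queueing operators are well-defined for the input pair `(a,s)`:
each supremum defining `G̃_j` is attained at some finite index. -/
def QWellDef (a s : ℤ → ℝ) : Prop := ∀ j : ℤ, ∃ v, IsGreatest (gtSet a s j) v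

lemma Icc_insert_top {a b : ℤ} (h : a ≤ b + 1) :
    Finset.Icc a (b+1) = insert (b+1) (Finset.Icc a b) := by
  ext x; simp only [Finset.mem_Icc, Finset.mem_insert]; omega


lemma sum_Icc_top (f : ℤ → ℝ) {a b : ℤ} (h : a ≤ b + 1) :
    ∑ i ∈ Finset.Icc a (b+1), f i = (∑ i ∈ Finset.Icc a b, f i) + f (b+1) := by
  rw [Icc_insert_top h, Finset.sum_insert (by simp)]
  ring


lemma cum_succ (a : ℤ → ℝ) (j : ℤ) : cum a (j+1) = cum a j + a (j+1) := by
  unfold cum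
  rcases lt_trichotomy j (-1) with h | h | h
  · rw [if_neg (by omega), if_neg (by omega)]
    have : Finset.Icc (j+1) 0 = insert (j+1) (Finset.Icc (j+1+1) 0) := by
      ext x; simp only [Finset.mem_Icc, Finset.mem_insert]; omega
    rw [this, Finset.sum_insert (by simp)]
    ring
  · subst h; norm_num
  · rw [if_pos (by omega), if_pos (by omega), sum_Icc_top _ (by omega)]


lemma sum_Icc_cum (a : ℤ → ℝ) {k j : ℤ} (h : k - 1 ≤ j) :
    ∑ i ∈ Finset.Icc k j, a i = cum a j - cum a (k - 1) := by
  obtain ⟨n, rfl⟩ : ∃ n : ℕ, j = (k-1) + n := ⟨(j - (k-1)).toNat, by omega⟩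
  clear h
  induction n with
  | zero =>
      have : Finset.Icc k (k-1+(0:ℕ)) = ∅ := by rw [Finset.Icc_eq_empty_iff]; omega
      simp [this]
  | succ n ih =>
      have e : (k - 1) + ((n:ℤ) + 1) = ((k-1) + n) + 1 := by ring
      push_cast
      rw [e, sum_Icc_top _ (by omega), cum_succ]
      push_cast at ih
      rw [ih]; ring

lemma gt_isGreatest {a s : ℤ → ℝ} (h : QWellDef a s) (j : ℤ) :
    IsGreatest (gtSet a s j) (queueGt a s j) := by
  obtain ⟨v, hv⟩ := h j
  have : queueGt a s j = v := hv.csSup_eq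
  rwa [this]


lemma gt_rec {a s : ℤ → ℝ} (h : QWellDef a s) (j : ℤ) :
    queueGt a s j = max (cum a j) (queueGt a s (j-1)) + s j := by
  have Hj := gt_isGreatest h j
  have Hj1 := gt_isGreatest h (j-1)
  apply le_antisymm
  · obtain ⟨k, hk, hv⟩ := Hj.1
    rcases eq_or_lt_of_le hk with rfl | hk'
    · rw [hv]
      have : ∑ i ∈ Finset.Icc k k, s i = s k := by simp
      rw [this]
      exact add_le_add_left (le_max_left _ _) _
    · have hk2 : k ≤ j - 1 := by omega
      have hsum : ∑ i ∈ Finset.Icc k j, s i = (∑ i ∈ Finset.Icc k (j-1), s i) + s j := by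
        have := sum_Icc_top s (a := k) (b := j-1) (by omega)
        simpa using this
      rw [hv, hsum, ← add_assoc]
      apply add_le_add_left
      calc cum a k + ∑ i ∈ Finset.Icc k (j-1), s i ≤ queueGt a s (j-1) :=
            Hj1.2 ⟨k, hk2, rfl⟩
        _ ≤ max (cum a j) (queueGt a s (j-1)) := le_max_right _ _
  · rw [max_add, max_le_iff]
    constructor
    · have : cum a j + s j ∈ gtSet a s j := ⟨j, le_refl j, by simp⟩
      exact Hj.2 this
    · obtain ⟨k, hk, hv⟩ := Hj1.1
      have hsum : ∑ i ∈ Finset.Icc k j, s i = (∑ i ∈ Finset.Icc k (j-1), s i) + s j := by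
        have := sum_Icc_top s (a := k) (b := j-1) (by omega)
        simpa using this
      have mem : cum a k + ∑ i ∈ Finset.Icc k j, s i ∈ gtSet a s j := ⟨k, by omega, rfl⟩
      have : queueGt a s (j-1) + s j = cum a k + ∑ i ∈ Finset.Icc k j, s i := by
        rw [hv, hsum]; ring
      rw [this]
      exact Hj.2 mem

lemma cum_pred (a : ℤ → ℝ) (j : ℤ) : cum a j = cum a (j-1) + a j := by
  have := cum_succ a (j-1)
  simpa using this


lemma queueD_eq {a s : ℤ → ℝ} (h : QWellDef a s) (j : ℤ) :
    queueD a s j = s j + max (cum a j - queueGt a s (j-1)) 0 := by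
  rw [queueD, gt_rec h j]
  rcases le_total (cum a j) (queueGt a s (j-1)) with hc | hc
  · rw [max_eq_right hc, max_eq_right (by linarith)]; ring
  · rw [max_eq_left hc, max_eq_left (by linarith)]; ring


lemma queueR_add_queueD {a s : ℤ → ℝ} (h : QWellDef a s) (j : ℤ) :
    queueR a s j + queueD a s j = a j + s j := by
  rw [queueR, queueT, queueD_eq h j]
  have hc := cum_pred a j
  rcases le_total (cum a j) (queueGt a s (j-1)) with hx | hx
  · rw [max_eq_right (by linarith), min_eq_left (by linarith)]; ring
  · rw [max_eq_left (by linarith), min_eq_right (by linarith)]; linarith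


lemma chain_top {a s : ℤ → ℝ} (h : QWellDef a s) {i m : ℤ} (him : i ≤ m)
    (hlt : queueGt a s (i-1) < cum a i)
    (hmax : ∀ j, i < j → j ≤ m → cum a j ≤ queueGt a s (j-1)) :
    queueGt a s m = cum a i + ∑ x ∈ Finset.Icc i m, s x := by
  obtain ⟨n, rfl⟩ : ∃ n : ℕ, m = i + n := ⟨(m - i).toNat, by omega⟩
  clear him
  induction n with
  | zero =>
      simp only [Nat.cast_zero, add_zero] at *
      rw [gt_rec h i, max_eq_left hlt.le]
      simp
  | succ n ih =>
      have e : i + ((n:ℤ) + 1) = (i + n) + 1 := by ring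
      push_cast
      rw [e, sum_Icc_top _ (by omega)]
      have hle : cum a (i + n + 1) ≤ queueGt a s (i + n) := by
        have := hmax (i + n + 1) (by omega) (by push_cast; omega)
        simpa using this
      rw [gt_rec h (i + (n:ℤ) + 1), max_eq_right (by simpa using hle)]
      have ihh := ih (fun j h1 h2 => hmax j h1 (by push_cast; omega))
      push_cast at ihh
      have e2 : i + (n:ℤ) + 1 - 1 = i + n := by ring
      rw [e2, ihh]
      ring


lemma sup'_add_const {S : Finset ℤ} (hS : S.Nonempty) (f : ℤ → ℝ) (c : ℝ) :
    S.sup' hS (fun x => f x + c) = S.sup' hS f + c := by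
  apply le_antisymm
  · exact Finset.sup'_le _ _ fun x hx => add_le_add_left (Finset.le_sup' f hx) c
  · have : S.sup' hS f ≤ S.sup' hS (fun x => f x + c) - c := by
      apply Finset.sup'_le
      intro x hx
      have := Finset.le_sup' (f := fun x => f x + c) hx
      linarith [Finset.le_sup' (fun x => f x + c) hx]
    linarith


lemma sup'_Icc_succ (f : ℤ → ℝ) {k m : ℤ} (hkm : k ≤ m) (H : (Finset.Icc k (m+1)).Nonempty) :
    (Finset.Icc k (m+1)).sup' H f
      = max ((Finset.Icc k m).sup' (Finset.nonempty_Icc.mpr hkm) f) (f (m+1)) := by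
  apply le_antisymm
  · apply Finset.sup'_le
    intro x hx
    simp only [Finset.mem_Icc] at hx
    rcases eq_or_lt_of_le hx.2 with rfl | hlt
    · exact le_max_right _ _
    · exact le_trans (Finset.le_sup' f (by simp [Finset.mem_Icc]; omega)) (le_max_left _ _)
  · apply max_le
    · exact Finset.sup'_le _ _ fun x hx => Finset.le_sup' f (by simp only [Finset.mem_Icc] at hx ⊢; omega)
    · exact Finset.le_sup' f (by simp [Finset.mem_Icc]; omega)


/-- Max-path exchange identity: for `k ≤ m`,
`max_{k≤ℓ≤m} [Σ_{i=k}^ℓ š_i + Σ_{j=ℓ}^m ã_j] = max_{k≤ℓ≤m} [Σ_{i=k}^ℓ a_i + Σ_{j=ℓ}^m s_j]`,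
where `š = R(a,s)` and `ã = D(a,s)`. -/
theorem queue_exchange_identity (a s : ℤ → ℝ) (h : QWellDef a s)
    (k m : ℤ) (hkm : k ≤ m) :
    (Finset.Icc k m).sup' (Finset.nonempty_Icc.mpr hkm)
        (fun ℓ => (∑ i ∈ Finset.Icc k ℓ, queueR a s i) +
          ∑ j ∈ Finset.Icc ℓ m, queueD a s j) =
      (Finset.Icc k m).sup' (Finset.nonempty_Icc.mpr hkm)
        (fun ℓ => (∑ i ∈ Finset.Icc k ℓ, a i) + ∑ j ∈ Finset.Icc ℓ m, s j) := by
  have key : ∀ n, k ≤ n → ∀ (hkn : k ≤ n),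
      (Finset.Icc k n).sup' (Finset.nonempty_Icc.mpr hkn)
          (fun ℓ => (∑ i ∈ Finset.Icc k ℓ, queueR a s i) +
            ∑ j ∈ Finset.Icc ℓ n, queueD a s j) =
        (Finset.Icc k n).sup' (Finset.nonempty_Icc.mpr hkn)
          (fun ℓ => (∑ i ∈ Finset.Icc k ℓ, a i) + ∑ j ∈ Finset.Icc ℓ n, s j) := by
    intro n hn
    refine Int.le_induction (motive := fun n _ => ∀ (hkn : k ≤ n),
      (Finset.Icc k n).sup' (Finset.nonempty_Icc.mpr hkn)
          (fun ℓ => (∑ i ∈ Finset.Icc k ℓ, queueR a s i) +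
            ∑ j ∈ Finset.Icc ℓ n, queueD a s j) =
        (Finset.Icc k n).sup' (Finset.nonempty_Icc.mpr hkn)
          (fun ℓ => (∑ i ∈ Finset.Icc k ℓ, a i) + ∑ j ∈ Finset.Icc ℓ n, s j)) ?_ ?_ n hn
    · intro _
      simp only [Finset.Icc_self, Finset.sup'_singleton, Finset.sum_singleton]
      exact queueR_add_queueD h k
    · intro m hm ih hkm1
      have ih := ih hm
      classical
      have hne := Finset.nonempty_Icc.mpr hm
      rw [sup'_Icc_succ _ hm, sup'_Icc_succ _ hm]
      have congr1 : (Finset.Icc k m).sup' hne (fun ℓ => (∑ i ∈ Finset.Icc k ℓ, queueR a s i) +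
            ∑ j ∈ Finset.Icc ℓ (m+1), queueD a s j)
          = (Finset.Icc k m).sup' hne (fun ℓ => (∑ i ∈ Finset.Icc k ℓ, queueR a s i) +
            ∑ j ∈ Finset.Icc ℓ m, queueD a s j) + queueD a s (m+1) := by
        rw [← sup'_add_const hne]
        apply Finset.sup'_congr hne rfl
        intro x hx
        simp only [Finset.mem_Icc] at hx
        rw [sum_Icc_top _ (by omega)]
        ring
      have congr2 : (Finset.Icc k m).sup' hne (fun ℓ => (∑ i ∈ Finset.Icc k ℓ, a i) +
            ∑ j ∈ Finset.Icc ℓ (m+1), s j)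
          = (Finset.Icc k m).sup' hne (fun ℓ => (∑ i ∈ Finset.Icc k ℓ, a i) +
            ∑ j ∈ Finset.Icc ℓ m, s j) + s (m+1) := by
        rw [← sup'_add_const hne]
        apply Finset.sup'_congr hne rfl
        intro x hx
        simp only [Finset.mem_Icc] at hx
        rw [sum_Icc_top _ (by omega)]
        ring
      rw [congr1, congr2, ih]
      set R := (Finset.Icc k m).sup' hne (fun ℓ => (∑ i ∈ Finset.Icc k ℓ, a i) +
        ∑ j ∈ Finset.Icc ℓ m, s j) with hR
      -- rewrite the (m+1) entries
      have e1 : ∑ i ∈ Finset.Icc k (m+1), queueR a s i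
          = (∑ i ∈ Finset.Icc k m, queueR a s i) + queueR a s (m+1) :=
        sum_Icc_top _ (by omega)
      have e2 : ∑ i ∈ Finset.Icc k (m+1), a i
          = (∑ i ∈ Finset.Icc k m, a i) + a (m+1) := sum_Icc_top _ (by omega)
      have e3 : ∑ j ∈ Finset.Icc (m+1) (m+1), queueD a s j = queueD a s (m+1) := by simp
      have e4 : ∑ j ∈ Finset.Icc (m+1) (m+1), s j = s (m+1) := by simp
      simp only [e1, e2, e3, e4]
      -- scalar facts
      have hGm := gt_isGreatest h m
      have hAk : ∑ i ∈ Finset.Icc k m, a i = cum a m - cum a (k-1) :=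
        sum_Icc_cum a (by omega)
      have hRle : R ≤ queueGt a s m - cum a (k-1) := by
        rw [hR]
        apply Finset.sup'_le
        intro x hx
        simp only [Finset.mem_Icc] at hx
        have hmem : cum a x + ∑ j ∈ Finset.Icc x m, s j ∈ gtSet a s m := ⟨x, hx.2, rfl⟩
        have hle := hGm.2 hmem
        rw [sum_Icc_cum a (k := k) (by omega)]
        linarith
      have hSkle : ∑ i ∈ Finset.Icc k m, queueR a s i ≤ ∑ i ∈ Finset.Icc k m, a i :=
        Finset.sum_le_sum fun i _ => min_le_left _ _
      have hD : queueD a s (m+1) = s (m+1) + max (cum a (m+1) - queueGt a s m) 0 := by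
        have := queueD_eq h (m+1)
        simpa using this
      have hRm : queueR a s (m+1) = min (a (m+1)) (queueGt a s m - cum a m) := by
        rw [queueR, queueT]
        simp
      have hcum : cum a (m+1) = cum a m + a (m+1) := cum_succ a m
      by_cases hP : ∃ i ∈ Finset.Icc k m, queueGt a s (i-1) < cum a i
      · -- R = Gt m - cum a (k-1)
        set F := (Finset.Icc k m).filter (fun i => queueGt a s (i-1) < cum a i) with hF
        have hFne : F.Nonempty := by
          obtain ⟨i, hi, hlt⟩ := hP
          exact ⟨i, Finset.mem_filter.mpr ⟨hi, hlt⟩⟩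
        set i0 := F.max' hFne with hi0def
        have hi0F : i0 ∈ F := F.max'_mem hFne
        have hi0Icc : i0 ∈ Finset.Icc k m := (Finset.mem_filter.mp hi0F).1
        have hi0lt : queueGt a s (i0-1) < cum a i0 := (Finset.mem_filter.mp hi0F).2
        simp only [Finset.mem_Icc] at hi0Icc
        have hmax : ∀ j, i0 < j → j ≤ m → cum a j ≤ queueGt a s (j-1) := by
          intro j h1 h2
          by_contra hc
          push_neg at hc
          have hjF : j ∈ F := Finset.mem_filter.mpr
            ⟨Finset.mem_Icc.mpr ⟨by omega, h2⟩, hc⟩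
          have := F.le_max' j hjF
          omega
        have hchain := chain_top h hi0Icc.2 hi0lt hmax
        have hRge : queueGt a s m - cum a (k-1) ≤ R := by
          rw [hR]
          have hterm := Finset.le_sup' (f := fun ℓ => (∑ i ∈ Finset.Icc k ℓ, a i) +
            ∑ j ∈ Finset.Icc ℓ m, s j) (Finset.mem_Icc.mpr ⟨hi0Icc.1, hi0Icc.2⟩)
          have hsum : ∑ i ∈ Finset.Icc k i0, a i = cum a i0 - cum a (k-1) :=
            sum_Icc_cum a (by omega)
          rw [hsum] at hterm
          rw [hchain]
          linarith
        have hReq : R = queueGt a s m - cum a (k-1) := le_antisymm hRle hRge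
        -- Šk + min ≤ R
        have hmle : (∑ i ∈ Finset.Icc k m, queueR a s i) + queueR a s (m+1) ≤ R := by
          rw [hReq, hRm]
          have : min (a (m+1)) (queueGt a s m - cum a m) ≤ queueGt a s m - cum a m :=
            min_le_right _ _
          linarith [hAk, hSkle]
        rw [max_eq_left (add_le_add_left hmle _)]
        rcases le_total (cum a (m+1)) (queueGt a s m) with hc | hc
        · rw [hD, max_eq_right (by linarith), max_eq_left (by rw [hReq]; linarith)]
          rw [hReq]; ring
        · rw [hD, max_eq_left (by linarith), max_eq_right (by rw [hReq]; linarith)]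
          rw [hReq]; linarith
      · push_neg at hP
        have hSkeq : ∑ i ∈ Finset.Icc k m, queueR a s i = ∑ i ∈ Finset.Icc k m, a i := by
          apply Finset.sum_congr rfl
          intro i hi
          have hle := hP i hi
          rw [queueR, queueT]
          apply min_eq_left
          have := cum_pred a i
          linarith
        rcases le_total (cum a (m+1)) (queueGt a s m) with hc | hc
        · have hD' : queueD a s (m+1) = s (m+1) := by
            rw [hD, max_eq_right (by linarith)]; ring
          have hRm' : queueR a s (m+1) = a (m+1) := by
            rw [hRm]; exact min_eq_left (by linarith)
          rw [hD', hRm', hSkeq]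
        · have hD' : queueD a s (m+1) = s (m+1) + (cum a (m+1) - queueGt a s m) := by
            rw [hD, max_eq_left (by linarith)]
          have hRm' : queueR a s (m+1) = queueGt a s m - cum a m := by
            rw [hRm]; exact min_eq_right (by linarith)
          have hA : R + queueD a s (m+1) ≤
              ((∑ i ∈ Finset.Icc k m, a i) + a (m+1)) + s (m+1) := by
            rw [hD', hAk]; linarith
          have hS : ((∑ i ∈ Finset.Icc k m, queueR a s i) + queueR a s (m+1))
              + queueD a s (m+1) = ((∑ i ∈ Finset.Icc k m, a i) + a (m+1)) + s (m+1) := by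
            rw [hD', hRm', hSkeq]; linarith
          rw [hD'] at hA
          rw [hS, hD', max_eq_right hA, max_eq_right (by linarith)]
  exact key m hkm hkm
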